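/- arXiv:2001.02864 — 13 statements merged into one kernel-verified Lean document; each statement's English description precedes it below -/
import Mathlib

section
/- If R is a P-symmetric ring, then every element a of R with a^2 = 0 lies in the prime radical P(R). -/
/-- A (two-sided) ideal `P` of a ring is prime if it is proper and for all `a b`,
`a R b ⊆ P` implies `a ∈ P` or `b ∈ P`. -/
def IsPrimeTwoSided {R : Type*} [Ring R] (P : TwoSidedIdeal R) : Prop :=
  P ≠ ⊤ ∧ ∀ a b : R, (∀ r : R, a * r * b ∈ P) → a ∈ P ∨ b ∈ P

/-- The prime radical `P(R)`: the intersection of all prime (two-sided) ideals of `R`. -/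
def primeRadical (R : Type*) [Ring R] : Set R :=
  {x | ∀ P : TwoSidedIdeal R, IsPrimeTwoSided P → x ∈ P}

/-- A ring `R` is `P`-symmetric if `a * b * c = 0` implies `b * a * c ∈ P(R)`. -/
def IsPSymmetric (R : Type*) [Ring R] : Prop :=
  ∀ a b c : R, a * b * c = 0 → b * a * c ∈ primeRadical R

/-- In a `P`-symmetric ring, every square-zero element lies in the prime radical. -/
theorem sq_zero_mem_primeRadical_of_isPSymmetric {R : Type*} [Ring R]
    (h : IsPSymmetric R) (a : R) (ha : a ^ 2 = 0) : a ∈ primeRadical R := by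
  intro P hP
  rcases hP.2 a a (fun r => h r a a (by rw [mul_assoc, ← pow_two, ha, mul_zero]) P hP) with h1 | h1
  · exact h1
  · exact h1
end

section
/- Let R be a 2-primal ring. The following are equivalent: (1) R is P-symmetric (abc = 0 implies bac ∈ P(R)); (2) for all a, b, c ∈ R, abc = 0 implies acb ∈ P(R); (3) for all a, b, c ∈ R, abc = 0 implies cba ∈ P(R). -/
lemma primeRadical_mul_mem_left {R : Type*} [Ring R] {x : R} (r : R)
    (hx : x ∈ primeRadical R) : r * x ∈ primeRadical R :=
  fun P hP => P.mul_mem_left r x (hx P hP)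

lemma primeRadical_mul_mem_right {R : Type*} [Ring R] {x : R} (r : R)
    (hx : x ∈ primeRadical R) : x * r ∈ primeRadical R :=
  fun P hP => P.mul_mem_right x r (hx P hP)

/-- In a 2-primal ring, `xy ∈ P(R)` implies `yx ∈ P(R)`. -/
lemma primeRadical_comm {R : Type*} [Ring R]
    (h2primal : {a : R | IsNilpotent a} = primeRadical R)
    {x y : R} (h : x * y ∈ primeRadical R) : y * x ∈ primeRadical R := by
  have hsq : (y * x) * (y * x) ∈ primeRadical R := by
    have : y * (x * y) * x ∈ primeRadical R :=
      primeRadical_mul_mem_right x (primeRadical_mul_mem_left y h)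
    simpa [mul_assoc] using this
  rw [← h2primal] at hsq ⊢
  obtain ⟨n, hn⟩ := hsq
  exact ⟨2 * n, by rw [pow_mul, sq]; exact hn⟩

/-- For a 2-primal ring `R` the following are equivalent: (1) `R` is `P`-symmetric;
(2) `a*b*c = 0` implies `a*c*b ∈ P(R)`; (3) `a*b*c = 0` implies `c*b*a ∈ P(R)`. -/
theorem twoPrimal_pSymmetric_tfae (R : Type*) [Ring R]
    (h2primal : {a : R | IsNilpotent a} = primeRadical R) :
    List.TFAE
      [IsPSymmetric R,
       ∀ a b c : R, a * b * c = 0 → a * c * b ∈ primeRadical R,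
       ∀ a b c : R, a * b * c = 0 → c * b * a ∈ primeRadical R] := by
  tfae_have 1 → 2 := by
    intro h1 a b c habc
    have hbac := h1 a b c habc
    -- b*a*c ∈ P ⇒ c*(b*a) ∈ P ⇒ (c*b)*a ∈ P ⇒ a*(c*b) ∈ P
    have h2 : c * (b * a) ∈ primeRadical R := primeRadical_comm h2primal hbac
    have h3 : a * (c * b) ∈ primeRadical R := by
      apply primeRadical_comm h2primal
      simpa [mul_assoc] using h2
    simpa [mul_assoc] using h3
  tfae_have 2 → 3 := by
    intro h2 a b c habc
    have h := h2 a b c habc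
    -- a*c*b = a*(c*b) ∈ P ⇒ (c*b)*a = c*b*a ∈ P
    have := primeRadical_comm h2primal (x := a) (y := c * b) (by simpa [mul_assoc] using h)
    simpa [mul_assoc] using this
  tfae_have 3 → 1 := by
    intro h3 a b c habc
    have h := h3 a b c habc
    -- c*b*a = c*(b*a) ∈ P ⇒ (b*a)*c = b*a*c ∈ P
    have := primeRadical_comm h2primal (x := c) (y := b * a) (by simpa [mul_assoc] using h)
    simpa [mul_assoc] using this
  tfae_finish
end

section
/- Let R be a left quasi-duo ring in which every prime ideal is maximal. Then R is P-symmetric. -/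
/-- A left quasi-duo ring in which every prime ideal is maximal is `P`-symmetric. -/
theorem leftQuasiDuo_isPSymmetric (R : Type*) [Ring R]
    (hqd : ∀ M : Ideal R, M.IsMaximal → ∀ a ∈ M, ∀ r : R, a * r ∈ M)
    (hpm : ∀ P : TwoSidedIdeal R, IsPrimeTwoSided P → IsCoatom P) :
    IsPSymmetric R := by
  intro a b c habc P hP
  obtain ⟨hne, hpr⟩ := hP
  -- P behaves like a completely prime ideal
  have key : ∀ x y : R, x * y ∈ P → x ∈ P ∨ y ∈ P := by
    have h1 : TwoSidedIdeal.asIdeal P ≠ ⊤ := by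
      intro h
      exact hne (P.eq_top (TwoSidedIdeal.mem_asIdeal.mp (h ▸ Submodule.mem_top)))
    obtain ⟨M, hM, hle⟩ := Ideal.exists_le_maximal _ h1
    set M' : TwoSidedIdeal R := TwoSidedIdeal.mk' (M : Set R) M.zero_mem
      (fun hx hy => M.add_mem hx hy) (fun hx => M.neg_mem hx)
      (fun hy => M.mul_mem_left _ hy) (fun hx => hqd M hM _ hx _) with hM'def
    have hmemM' : ∀ x : R, x ∈ M' ↔ x ∈ M := fun x =>
      TwoSidedIdeal.mem_mk' _ _ _ _ _ _ x
    have hPM' : P = M' := by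
      have hle' : P ≤ M' := fun x hx => (hmemM' x).mpr (hle (TwoSidedIdeal.mem_asIdeal.mpr hx))
      by_contra hne'
      have : M' = ⊤ := (hpm P ⟨hne, hpr⟩).2 M' (lt_of_le_of_ne hle' hne')
      exact hM.ne_top (Ideal.eq_top_iff_one M |>.mpr
        ((hmemM' 1).mp (this ▸ TwoSidedIdeal.mem_top R)))
    -- every element not in P is left invertible mod P
    have hinv : ∀ x : R, x ∉ P → ∃ u : R, u * x - 1 ∈ P := by
      intro x hx
      have hxM : x ∉ M := fun h => hx (hPM' ▸ (hmemM' x).mpr h)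
      have htop : M ⊔ Ideal.span {x} = ⊤ := by
        refine hM.1.2 _ (lt_of_le_of_ne le_sup_left ?_)
        intro h
        exact hxM (h ▸ Submodule.mem_sup_right (Ideal.subset_span rfl))
      have h1 : (1 : R) ∈ M ⊔ Ideal.span {x} := htop ▸ Submodule.mem_top
      obtain ⟨m, hm, z, hz, hmz⟩ := Submodule.mem_sup.mp h1
      obtain ⟨u, hu⟩ := Submodule.mem_span_singleton.mp hz
      refine ⟨u, ?_⟩
      have : u * x - 1 = -m := by
        rw [← hmz, ← hu]; simp [smul_eq_mul]
      rw [this]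
      exact hPM' ▸ (hmemM' (-m)).mpr (M.neg_mem hm)
    intro x y hxy
    by_cases hx : x ∈ P
    · exact Or.inl hx
    · right
      obtain ⟨u, hu⟩ := hinv x hx
      have h1 : u * (x * y) ∈ P := P.mul_mem_left _ _ hxy
      have h2 : (u * x - 1) * y ∈ P := P.mul_mem_right _ _ hu
      have : y = u * (x * y) - (u * x - 1) * y := by noncomm_ring
      rw [this]
      exact P.sub_mem h1 h2
  have h0 : a * (b * c) ∈ P := by rw [← mul_assoc, habc]; exact P.zero_mem
  rcases key a (b * c) h0 with ha | hbc
  · exact P.mul_mem_right _ _ (P.mul_mem_left _ _ ha)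
  · rcases key b c hbc with hb | hc
    · exact P.mul_mem_right _ _ (P.mul_mem_right _ _ hb)
    · exact P.mul_mem_left _ _ hc
end

section
/- Every central symmetric ring is P-symmetric. -/
/-- A central element can be shifted across products. -/
lemma cent_shift {R : Type*} [Ring R] {z : R} (hz : ∀ r : R, z * r = r * z)
    (x y : R) : x * (z * y) = z * (x * y) := by
  rw [← mul_assoc, ← hz, mul_assoc]

/-- A central nilpotent element lies in every prime two-sided ideal. -/
lemma central_nilpotent_mem_prime {R : Type*} [Ring R] (P : TwoSidedIdeal R)
    (hP : IsPrimeTwoSided P) (x : R) (hx : ∀ r : R, x * r = r * x) :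
    ∀ n : ℕ, x ^ (n + 1) ∈ P → x ∈ P := by
  intro n
  induction n with
  | zero => intro hmem; rwa [pow_one] at hmem
  | succ n ih =>
    intro hmem
    rcases hP.2 x (x ^ (n + 1)) (fun r => by
      have : x * r * x ^ (n + 1) = r * x ^ (n + 2) := by
        rw [hx r, mul_assoc, ← pow_succ']
      rw [this]
      exact P.mul_mem_left _ _ hmem) with h1 | h2
    · exact h1
    · exact ih h2

/-- Every central symmetric ring is `P`-symmetric. -/
theorem centralSymmetric_isPSymmetric {R : Type*} [Ring R]
    (h : ∀ a b c : R, a * b * c = 0 → b * a * c ∈ Set.center R) : IsPSymmetric R := by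
  intro a b c habc P hP
  have ht : ∀ r : R, (b * a * c) * r = r * (b * a * c) := by
    have := h a b c habc
    intro r; exact (Set.mem_center_iff.mp this).comm r
  have hs0 : (a * b) * c * 1 = 0 := by simpa using habc
  have hs : ∀ r : R, (c * (a * b)) * r = r * (c * (a * b)) := by
    have := h (a * b) c 1 hs0
    rw [mul_one] at this
    intro r; exact (Set.mem_center_iff.mp this).comm r
  have hss : (c * (a * b)) * (c * (a * b)) = 0 := by
    have e : (c * (a * b)) * (c * (a * b)) = c * ((a * b * c) * (a * b)) := by
      noncomm_ring
    rw [e, habc, zero_mul, mul_zero]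
  have e1 : b * (b * a * c) * (a * ((b * a * c) * c)) =
      (b * a * c) * ((b * a * c) * (b * a * c)) := by
    rw [mul_assoc, cent_shift ht, cent_shift ht a c, cent_shift ht, ← mul_assoc b a c]
  have e2 : (c * (a * b)) * (b * (b * (a * (a * (c * c))))) =
      b * (b * a * c) * (a * ((b * a * c) * c)) := by
    rw [← cent_shift hs b, ← cent_shift hs b, ← cent_shift hs a]
    noncomm_ring
  have ht3 : (b * a * c) * ((b * a * c) * (b * a * c)) =
      (c * (a * b)) * (b * (b * (a * (a * (c * c))))) := by
    rw [← e1, ← e2]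
  have ht6 : (b * a * c) ^ 6 = 0 := by
    have e : (b * a * c) ^ 6 =
        ((b * a * c) * ((b * a * c) * (b * a * c))) *
        ((b * a * c) * ((b * a * c) * (b * a * c))) := by
      rw [show (6:ℕ) = 3 * 2 from rfl, pow_mul, sq, pow_succ, pow_succ, pow_one]; noncomm_ring
    rw [e, ht3, mul_assoc, cent_shift hs, ← mul_assoc, hss, zero_mul]
  exact central_nilpotent_mem_prime P hP _ ht 5 (by rw [ht6]; exact P.zero_mem)
end

section
/- Every P-symmetric ring is weakly reversible: if a, b, r ∈ R satisfy ab = 0, then Rbra is a nil left ideal of R. -/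
open Pointwise Set in
/-- Products of elements of spans of singletons land in any ideal absorbing `a * r * b`. -/
lemma span_mul_span_mem {R : Type*} [Ring R] {M : TwoSidedIdeal R} {a b : R}
    (hab : ∀ r : R, a * r * b ∈ M) {u v : R}
    (hu : u ∈ TwoSidedIdeal.span {a}) (hv : v ∈ TwoSidedIdeal.span {b}) :
    u * v ∈ M := by
  rw [TwoSidedIdeal.mem_span_iff_mem_addSubgroup_closure] at hu hv
  have gen : ∀ r1 s1 z, z ∈ AddSubgroup.closure (univ * ({b} : Set R) * univ) →
      r1 * a * s1 * z ∈ M := by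
    intro r1 s1 z hz
    refine AddSubgroup.closure_induction (p := fun z _ => r1 * a * s1 * z ∈ M) ?_ ?_ ?_ ?_ hz
    · rintro z ⟨w, ⟨r2, -, b1, hb1, rfl⟩, s2, -, rfl⟩
      rw [Set.mem_singleton_iff] at hb1
      rw [hb1]
      have key := M.mul_mem_right (r1 * (a * (s1 * r2) * b)) s2
        (M.mul_mem_left r1 _ (hab (s1 * r2)))
      have heq : r1 * a * s1 * (r2 * b * s2) = r1 * (a * (s1 * r2) * b) * s2 := by
        noncomm_ring
      rwa [heq]
    · show r1 * a * s1 * 0 ∈ M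
      rw [mul_zero]; exact M.zero_mem
    · intro z1 z2 _ _ ih1 ih2
      show r1 * a * s1 * (z1 + z2) ∈ M
      rw [mul_add]; exact M.add_mem ih1 ih2
    · intro z _ ih
      show r1 * a * s1 * (-z) ∈ M
      rw [mul_neg]; exact M.neg_mem ih
  refine AddSubgroup.closure_induction (p := fun u _ => u * v ∈ M) ?_ ?_ ?_ ?_ hu
  · rintro u ⟨w, ⟨r1, -, a1, ha1, rfl⟩, s1, -, rfl⟩
    rw [Set.mem_singleton_iff] at ha1
    rw [ha1]
    exact gen r1 s1 v hv
  · show (0 : R) * v ∈ M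
    rw [zero_mul]; exact M.zero_mem
  · intro u1 u2 _ _ ih1 ih2
    show (u1 + u2) * v ∈ M
    rw [add_mul]; exact M.add_mem ih1 ih2
  · intro u _ ih
    show (-u) * v ∈ M
    rw [neg_mul]; exact M.neg_mem ih

/-- Every element of the prime radical is nilpotent. -/
lemma primeRadical_isNilpotent {R : Type*} [Ring R] {x : R}
    (hx : x ∈ primeRadical R) : IsNilpotent x := by
  by_contra hnil
  simp only [IsNilpotent, not_exists] at hnil
  -- the family of ideals avoiding all powers of x
  set S : Set (TwoSidedIdeal R) := {I | ∀ n : ℕ, x ^ n ∉ I} with hS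
  have hbot : (⊥ : TwoSidedIdeal R) ∈ S := by
    intro n hn
    exact hnil n ((TwoSidedIdeal.mem_bot R).mp hn)
  -- Zorn's lemma
  obtain ⟨M, -, hMS, hMmax⟩ := zorn_le_nonempty₀ S (fun c hcS hchain y hy => by
    -- union of a nonempty chain
    refine ⟨TwoSidedIdeal.mk' {z : R | ∃ J ∈ c, z ∈ J}
      ⟨y, hy, TwoSidedIdeal.zero_mem y⟩
      (fun {z w} hz hw => by
        obtain ⟨J1, hJ1, hz⟩ := hz
        obtain ⟨J2, hJ2, hw⟩ := hw
        rcases hchain.total hJ1 hJ2 with hle | hle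
        · exact ⟨J2, hJ2, J2.add_mem (hle hz) hw⟩
        · exact ⟨J1, hJ1, J1.add_mem hz (hle hw)⟩)
      (fun {z} hz => by obtain ⟨J, hJ, hz⟩ := hz; exact ⟨J, hJ, J.neg_mem hz⟩)
      (fun {z w} hw => by obtain ⟨J, hJ, hw⟩ := hw; exact ⟨J, hJ, J.mul_mem_left z w hw⟩)
      (fun {z w} hz => by obtain ⟨J, hJ, hz⟩ := hz; exact ⟨J, hJ, J.mul_mem_right z w hz⟩),
      ?_, ?_⟩
    · intro n hn
      rw [TwoSidedIdeal.mem_mk'] at hn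
      obtain ⟨J, hJ, hn⟩ := hn
      exact hcS hJ n hn
    · intro J hJ z hz
      exact (TwoSidedIdeal.mem_mk' _ _ _ _ _ _ z).mpr ⟨J, hJ, hz⟩) ⊥ hbot
  -- M is prime
  have hMprime : IsPrimeTwoSided M := by
    constructor
    · intro h
      exact hMS 0 (by rw [h]; exact TwoSidedIdeal.mem_top R)
    · intro a b hab
      by_contra hcon
      push_neg at hcon
      obtain ⟨ha, hb⟩ := hcon
      -- M ⊔ span {a} is strictly bigger, so contains some power of x
      have hSa : M ⊔ TwoSidedIdeal.span {a} ∉ S := by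
        intro hmem
        exact ha ((hMmax hmem le_sup_left) (TwoSidedIdeal.mem_sup_right
          (TwoSidedIdeal.subset_span rfl)))
      have hSb : M ⊔ TwoSidedIdeal.span {b} ∉ S := by
        intro hmem
        exact hb ((hMmax hmem le_sup_left) (TwoSidedIdeal.mem_sup_right
          (TwoSidedIdeal.subset_span rfl)))
      simp only [hS, Set.mem_setOf_eq, not_forall, not_not] at hSa hSb
      obtain ⟨n, hn⟩ := hSa
      obtain ⟨m, hm⟩ := hSb
      rw [TwoSidedIdeal.mem_sup] at hn hm
      obtain ⟨p, hp, u, hu, hpu⟩ := hn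
      obtain ⟨q, hq, v, hv, hqv⟩ := hm
      apply hMS (n + m)
      rw [pow_add, ← hpu, ← hqv]
      have h1 : (p + u) * (q + v) = p * q + p * v + u * q + u * v := by noncomm_ring
      rw [h1]
      refine M.add_mem (M.add_mem (M.add_mem ?_ ?_) ?_) (span_mul_span_mem hab hu hv)
      · exact M.mul_mem_right p q hp
      · exact M.mul_mem_right p v hp
      · exact M.mul_mem_left u q hq
  exact hMS 1 (by rw [pow_one]; exact hx M hMprime)

/-- Every `P`-symmetric ring is weakly reversible: if `a * b = 0` then for every `r`,
the left ideal `R·(b*r*a)` is nil. -/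
theorem isPSymmetric_weaklyReversible {R : Type*} [Ring R]
    (h : IsPSymmetric R) : ∀ a b r : R, a * b = 0 →
      ∀ s : R, IsNilpotent (s * b * r * a) := by
  intro a b r hab s
  have key : a * s * b ∈ primeRadical R := by
    apply h s a b
    rw [mul_assoc, hab, mul_zero]
  have hsq : (s * b * r * a) * (s * b * r * a) ∈ primeRadical R := by
    intro P hP
    have h1 : (s * b * r * a) * (s * b * r * a) = (s * b * r) * (a * s * b) * (r * a) := by
      noncomm_ring
    rw [h1]
    exact P.mul_mem_right _ _ (P.mul_mem_left _ _ (key P hP))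
  obtain ⟨n, hn⟩ := primeRadical_isNilpotent hsq
  exact ⟨2 * n, by rw [pow_mul, sq, hn]⟩
end

section
/- Let R be a ring and e an idempotent of R. If R is P-symmetric, then the corner ring eRe is P-symmetric. -/
/-- The corner `eRe` of a ring at an idempotent `e`, as a non-unital subring. -/
def corner {R : Type*} [Ring R] (e : R) (he : IsIdempotentElem e) : NonUnitalSubring R where
  carrier := {x | e * x * e = x}
  zero_mem' := by simp
  add_mem' := by
    intro x y hx hy
    simp only [Set.mem_setOf_eq] at *
    rw [mul_add, add_mul, hx, hy]
  neg_mem' := by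
    intro x hx
    simp only [Set.mem_setOf_eq] at *
    rw [mul_neg, neg_mul, hx]
  mul_mem' := by
    intro x y hx hy
    simp only [Set.mem_setOf_eq] at *
    have hex : e * x = x := by
      calc e * x = e * (e * x * e) := by rw [hx]
        _ = e * e * x * e := by noncomm_ring
        _ = e * x * e := by rw [he]
        _ = x := hx
    have hye : y * e = y := by
      calc y * e = (e * y * e) * e := by rw [hy]
        _ = e * y * (e * e) := by noncomm_ring
        _ = e * y * e := by rw [he]
        _ = y := hy
    calc e * (x * y) * e = (e * x) * (y * e) := by noncomm_ring
      _ = x * y := by rw [hex, hye]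

/-- The corner `eRe` is a (unital) ring with identity `e`. -/
noncomputable def cornerRing {R : Type*} [Ring R] (e : R) (he : IsIdempotentElem e) :
    Ring (corner e he) :=
  { (inferInstance : NonUnitalRing (corner e he)) with
    one := ⟨e, show e * e * e = e by rw [he, he]⟩
    one_mul := by
      rintro ⟨x, hx⟩
      ext
      show e * x = x
      calc e * x = e * (e * x * e) := by rw [hx]
        _ = e * e * x * e := by noncomm_ring
        _ = e * x * e := by rw [he]
        _ = x := hx
    mul_one := by
      rintro ⟨x, hx⟩
      ext
      show x * e = x
      calc x * e = (e * x * e) * e := by rw [hx]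
        _ = e * x * (e * e) := by noncomm_ring
        _ = e * x * e := by rw [he]
        _ = x := hx }

/-- If `R` is `P`-symmetric and `e` is an idempotent, then the corner ring `eRe` is
`P`-symmetric. -/
theorem corner_isPSymmetric {R : Type*} [Ring R] (e : R) (he : IsIdempotentElem e)
    (h : IsPSymmetric R) :
    letI : Ring (corner e he) := cornerRing e he
    IsPSymmetric (corner e he) := by
  letI : Ring (corner e he) := cornerRing e he
  intro a b c habc Q hQ
  -- reduce to membership in `R`'s prime radical
  have habcR : (a : R) * b * c = 0 := congrArg Subtype.val habc
  have hbac : (b : R) * a * c ∈ primeRadical R := h a b c habcR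
  set x : corner e he := b * a * c with hxdef
  have hxval : (x : R) = (b : R) * a * c := rfl
  -- an auxiliary map into the corner
  have memC : ∀ y : R, e * (e * y * e) * e = e * y * e := by
    intro y
    rw [show e * (e * y * e) * e = (e * e) * y * (e * e) by noncomm_ring, he]
  let f : R → corner e he := fun y => ⟨e * y * e, memC y⟩
  -- the candidate prime ideal of R
  let C : Set R := {r | ∀ s t : R, f (s * r * t) ∈ Q}
  have hzero : (0 : R) ∈ C := by
    intro s t
    have : f (s * 0 * t) = 0 := by
      apply Subtype.ext
      show e * (s * 0 * t) * e = 0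
      simp
    rw [this]; exact Q.zero_mem
  have hadd : ∀ {r r' : R}, r ∈ C → r' ∈ C → r + r' ∈ C := by
    intro r r' hr hr' s t
    have : f (s * (r + r') * t) = f (s * r * t) + f (s * r' * t) := by
      apply Subtype.ext
      show e * (s * (r + r') * t) * e = e * (s * r * t) * e + e * (s * r' * t) * e
      noncomm_ring
    rw [this]; exact Q.add_mem (hr s t) (hr' s t)
  have hneg : ∀ {r : R}, r ∈ C → -r ∈ C := by
    intro r hr s t
    have : f (s * (-r) * t) = - f (s * r * t) := by
      apply Subtype.ext
      show e * (s * (-r) * t) * e = -(e * (s * r * t) * e)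
      noncomm_ring
    rw [this]; exact Q.neg_mem (hr s t)
  have hml : ∀ {u r : R}, r ∈ C → u * r ∈ C := by
    intro u r hr s t
    have : s * (u * r) * t = (s * u) * r * t := by noncomm_ring
    rw [this]; exact hr (s * u) t
  have hmr : ∀ {r u : R}, r ∈ C → r * u ∈ C := by
    intro r u hr s t
    have : s * (r * u) * t = s * r * (u * t) := by noncomm_ring
    rw [this]; exact hr s (u * t)
  let P : TwoSidedIdeal R := TwoSidedIdeal.mk' C hzero hadd hneg hml hmr
  have memP : ∀ r : R, r ∈ P ↔ r ∈ C :=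
    TwoSidedIdeal.mem_mk' C hzero hadd hneg hml hmr
  have hfone : f e = (1 : corner e he) := by
    apply Subtype.ext
    show e * e * e = e
    rw [he, he]
  -- P is prime
  have hP : IsPrimeTwoSided P := by
    constructor
    · intro htop
      have : e ∈ P := htop ▸ TwoSidedIdeal.mem_top _
      have h2 := (memP e).mp this e e
      rw [show e * e * e = e by rw [he, he], hfone] at h2
      exact hQ.1 (Q.eq_top h2)
    · intro α β hαβ
      by_cases hα : α ∈ P
      · exact Or.inl hα
      · right
        rw [memP] at hα
        simp only [C, Set.mem_setOf_eq, not_forall] at hα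
        obtain ⟨s, t, hst⟩ := hα
        rw [memP]
        intro s' t'
        have hmid : ∀ ρ : corner e he,
            f (s * α * t) * ρ * f (s' * β * t') ∈ Q := by
          intro ρ
          have key : f (s * α * t) * ρ * f (s' * β * t')
              = f (s * (α * (t * e * (ρ : R) * e * s') * β) * t') := by
            apply Subtype.ext
            show (e * (s * α * t) * e) * (ρ : R) * (e * (s' * β * t') * e)
                = e * (s * (α * (t * e * (ρ : R) * e * s') * β) * t') * e
            noncomm_ring
          rw [key]
          exact (memP _).mp (hαβ (t * e * (ρ : R) * e * s')) s t'
        rcases hQ.2 (f (s * α * t)) (f (s' * β * t')) hmid with h1 | h2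
        · exact absurd h1 hst
        · exact h2
  -- conclude
  have hxP : (x : R) ∈ P := hbac P hP
  have := (memP _).mp hxP e e
  have hfx : f (e * (x : R) * e) = x := by
    apply Subtype.ext
    show e * (e * (x : R) * e) * e = (x : R)
    rw [memC, x.2]
  rwa [hfx] at this
end

section
/- For any ring R, if R/P(R) is P-symmetric then R is P-symmetric. -/
/-- The prime radical as a two-sided ideal (the infimum of all prime two-sided ideals). -/
def primeRadicalIdeal (R : Type*) [Ring R] : TwoSidedIdeal R :=
  sInf {P | IsPrimeTwoSided P}

lemma mem_primeRadicalIdeal_iff {R : Type*} [Ring R] (x : R) :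
    x ∈ primeRadicalIdeal R ↔ x ∈ primeRadical R := by
  rw [primeRadicalIdeal, TwoSidedIdeal.mem_sInf]
  rfl

/-- Pushforward of a prime ideal `P ⊇ P(R)` to the quotient by the prime radical. -/
def pushPrime {R : Type*} [Ring R] (P : TwoSidedIdeal R) :
    TwoSidedIdeal (primeRadicalIdeal R).ringCon.Quotient :=
  TwoSidedIdeal.mk' {x | ∃ a ∈ P, (a : (primeRadicalIdeal R).ringCon.Quotient) = x}
    ⟨0, P.zero_mem, rfl⟩
    (fun {x y} ⟨a, ha, hax⟩ ⟨b, hb, hby⟩ => ⟨a + b, P.add_mem ha hb, by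
      rw [RingCon.coe_add, hax, hby]⟩)
    (fun {x} ⟨a, ha, hax⟩ => ⟨-a, P.neg_mem ha, by rw [RingCon.coe_neg, hax]⟩)
    (fun {x y} ⟨b, hb, hby⟩ => by
      obtain ⟨a, rfl⟩ := Quotient.mk''_surjective x
      exact ⟨a * b, P.mul_mem_left _ _ hb, by rw [RingCon.coe_mul, hby]; rfl⟩)
    (fun {x y} ⟨a, ha, hax⟩ => by
      obtain ⟨b, rfl⟩ := Quotient.mk''_surjective y
      exact ⟨a * b, P.mul_mem_right _ _ ha, by rw [RingCon.coe_mul, hax]; rfl⟩)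

lemma mem_pushPrime_iff {R : Type*} [Ring R] {P : TwoSidedIdeal R}
    (hP : IsPrimeTwoSided P) (a : R) :
    (a : (primeRadicalIdeal R).ringCon.Quotient) ∈ pushPrime P ↔ a ∈ P := by
  rw [pushPrime, TwoSidedIdeal.mem_mk']
  constructor
  · rintro ⟨b, hb, hba⟩
    rw [RingCon.eq, TwoSidedIdeal.rel_iff, mem_primeRadicalIdeal_iff] at hba
    have : b - a ∈ P := hba P hP
    have := P.sub_mem hb this
    simpa using this
  · exact fun ha => ⟨a, ha, rfl⟩

lemma pushPrime_isPrime {R : Type*} [Ring R] {P : TwoSidedIdeal R}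
    (hP : IsPrimeTwoSided P) : IsPrimeTwoSided (pushPrime P) := by
  constructor
  · intro htop
    have h1 : (1 : (primeRadicalIdeal R).ringCon.Quotient) ∈ pushPrime P := by
      rw [htop]; trivial
    rw [show (1 : (primeRadicalIdeal R).ringCon.Quotient) = ((1 : R) : _) from rfl,
      mem_pushPrime_iff hP] at h1
    exact hP.1 (by rw [eq_top_iff]; intro x _; simpa using P.mul_mem_left x 1 h1)
  · intro x y hxy
    obtain ⟨a, rfl⟩ := Quotient.mk''_surjective x
    obtain ⟨b, rfl⟩ := Quotient.mk''_surjective y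
    have : a ∈ P ∨ b ∈ P := by
      apply hP.2
      intro r
      have this : ((a * r * b : R) : (primeRadicalIdeal R).ringCon.Quotient) ∈ pushPrime P :=
        hxy (r : (primeRadicalIdeal R).ringCon.Quotient)
      rwa [mem_pushPrime_iff hP] at this
    rcases this with h | h
    · exact Or.inl ((mem_pushPrime_iff hP a).2 h)
    · exact Or.inr ((mem_pushPrime_iff hP b).2 h)

/-- If `R / P(R)` is `P`-symmetric, then `R` is `P`-symmetric. -/
theorem isPSymmetric_of_quotient_primeRadical (R : Type*) [Ring R]
    (h : IsPSymmetric (primeRadicalIdeal R).ringCon.Quotient) : IsPSymmetric R := by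
  intro a b c habc P hP
  have key := h (a : (primeRadicalIdeal R).ringCon.Quotient) b c (by
    rw [← RingCon.coe_mul, ← RingCon.coe_mul, habc, RingCon.coe_zero])
  have := key (pushPrime P) (pushPrime_isPrime hP)
  rwa [← RingCon.coe_mul, ← RingCon.coe_mul, mem_pushPrime_iff hP] at this
end

section
/- A subdirect product of two P-symmetric rings is P-symmetric. Precisely, if R is a ring with ideals I and J such that I ∩ J = 0 and both R/I and R/J are P-symmetric, then R is P-symmetric. -/
private lemma aux_psym {R : Type*} [Ring R] (K P : TwoSidedIdeal R) (hKP : K ≤ P)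
    (hP : IsPrimeTwoSided P) (hK : IsPSymmetric K.ringCon.Quotient)
    (a b c : R) (habc : a * b * c = 0) : b * a * c ∈ P := by
  classical
  set f : R →+* K.ringCon.Quotient := K.ringCon.mk' with hf
  have fsurj : Function.Surjective f := Quotient.mk''_surjective
  -- the image of P in the quotient
  have hdesc : ∀ r s : R, f r = f s → (r ∈ P ↔ s ∈ P) := by
    intro r s hrs
    have : r - s ∈ K := (K.rel_iff r s).1 (K.ringCon.eq.1 hrs)
    have hrsP : r - s ∈ P := hKP this
    constructor
    · intro hr; have := P.sub_mem hr hrsP; simpa using this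
    · intro hs; have := P.add_mem hrsP hs; simpa using this
  let Q : TwoSidedIdeal K.ringCon.Quotient :=
    TwoSidedIdeal.mk' {x | ∃ r ∈ P, f r = x}
      ⟨0, P.zero_mem, map_zero f⟩
      (by rintro x y ⟨r, hr, rfl⟩ ⟨s, hs, rfl⟩; exact ⟨r + s, P.add_mem hr hs, map_add f r s⟩)
      (by rintro x ⟨r, hr, rfl⟩; exact ⟨-r, P.neg_mem hr, map_neg f r⟩)
      (by rintro x y ⟨s, hs, rfl⟩
          obtain ⟨t, rfl⟩ := fsurj x
          exact ⟨t * s, P.mul_mem_left t s hs, map_mul f t s⟩)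
      (by rintro x y ⟨s, hs, rfl⟩
          obtain ⟨t, rfl⟩ := fsurj y
          exact ⟨s * t, P.mul_mem_right s t hs, map_mul f s t⟩)
  have memQ : ∀ r : R, f r ∈ Q ↔ r ∈ P := by
    intro r
    rw [TwoSidedIdeal.mem_mk']
    constructor
    · rintro ⟨s, hs, hsr⟩; exact (hdesc s r hsr).1 hs
    · intro hr; exact ⟨r, hr, rfl⟩
  have hQ : IsPrimeTwoSided Q := by
    constructor
    · intro htop
      have : (1 : K.ringCon.Quotient) ∈ Q := htop ▸ trivial
      have h1 : f 1 ∈ Q := by rwa [map_one f]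
      exact hP.1 (TwoSidedIdeal.one_mem_iff P |>.1 ((memQ 1).1 h1))
    · intro x y hxy
      obtain ⟨u, rfl⟩ := fsurj x
      obtain ⟨v, rfl⟩ := fsurj y
      have huv : ∀ r : R, u * r * v ∈ P := by
        intro r
        have := hxy (f r)
        rw [← map_mul f, ← map_mul f, memQ] at this
        exact this
      rcases hP.2 u v huv with h | h
      · exact Or.inl ((memQ u).2 h)
      · exact Or.inr ((memQ v).2 h)
  have h0 : f a * f b * f c = 0 := by
    rw [← map_mul f, ← map_mul f, habc, map_zero f]
  have hmem := hK (f a) (f b) (f c) h0 Q hQ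
  rw [← map_mul f, ← map_mul f, memQ] at hmem
  exact hmem

/-- A subdirect product of two `P`-symmetric rings is `P`-symmetric: if `I ∩ J = 0` and both
`R / I` and `R / J` are `P`-symmetric, then `R` is `P`-symmetric. -/
theorem isPSymmetric_of_subdirect (R : Type*) [Ring R]
    (I J : TwoSidedIdeal R) (hIJ : I ⊓ J = ⊥)
    (hI : IsPSymmetric I.ringCon.Quotient) (hJ : IsPSymmetric J.ringCon.Quotient) :
    IsPSymmetric R := by
  intro a b c habc P hP
  by_cases hIP : I ≤ P
  · exact aux_psym I P hIP hP hI a b c habc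
  · have hJP : J ≤ P := by
      rw [TwoSidedIdeal.le_iff] at hIP
      rw [Set.not_subset] at hIP
      obtain ⟨x, hxI, hxP⟩ := hIP
      intro y hy
      have hxy : ∀ r : R, x * r * y ∈ P := by
        intro r
        have h1 : x * r * y ∈ I := I.mul_mem_right _ _ (I.mul_mem_right _ _ hxI)
        have h2 : x * r * y ∈ J := J.mul_mem_left _ _ hy
        have : x * r * y ∈ I ⊓ J := (TwoSidedIdeal.mem_inf R).2 ⟨h1, h2⟩
        rw [hIJ, TwoSidedIdeal.mem_bot] at this
        rw [this]
        exact P.zero_mem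
      rcases hP.2 x y hxy with h | h
      · exact absurd h hxP
      · exact h
    exact aux_psym J P hJP hP hJ a b c habc
end

section
/- Let R be a ring and S a multiplicatively closed subset of R consisting of central regular (non-zero-divisor) elements. Then the prime radical of the localization S^{-1}R equals { u^{-1}a : u ∈ S, a ∈ P(R) }. -/
namespace TwoSidedIdeal

variable {R : Type*} [Ring R]

theorem mem_sSup_of_isChain {c : Set (TwoSidedIdeal R)} (hc : IsChain (· ≤ ·) c)
    (hne : c.Nonempty) {x : R} : x ∈ sSup c ↔ ∃ I ∈ c, x ∈ I := by
  refine ⟨fun hx => ?_, fun ⟨I, hI, hxI⟩ => le_sSup hI hxI⟩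
  have hdir : ∀ I ∈ c, ∀ J ∈ c, ∃ K ∈ c, I ≤ K ∧ J ≤ K := hc.directedOn
  let U : TwoSidedIdeal R := .mk' (⋃ I ∈ c, (I : Set R))
    (hne.elim fun I hI => Set.mem_biUnion hI I.zero_mem)
    (by
      simp only [Set.mem_iUnion, SetLike.mem_coe]
      rintro y z ⟨I, hI, hy⟩ ⟨J, hJ, hz⟩
      obtain ⟨K, hK, hIK, hJK⟩ := hdir I hI J hJ
      exact ⟨K, hK, K.add_mem (hIK hy) (hJK hz)⟩)
    (by
      simp only [Set.mem_iUnion, SetLike.mem_coe]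
      rintro y ⟨I, hI, hy⟩
      exact ⟨I, hI, I.neg_mem hy⟩)
    (by
      simp only [Set.mem_iUnion, SetLike.mem_coe]
      rintro y z ⟨I, hI, hz⟩
      exact ⟨I, hI, I.mul_mem_left y z hz⟩)
    (by
      simp only [Set.mem_iUnion, SetLike.mem_coe]
      rintro y z ⟨I, hI, hy⟩
      exact ⟨I, hI, I.mul_mem_right y z hy⟩)
  have hU : sSup c ≤ U := sSup_le fun I hI y hy => (mem_mk' ..).2 (Set.mem_biUnion hI hy)
  simpa [U, mem_mk'] using hU hx

theorem mul_mul_mem_of_mem_span_right {P : TwoSidedIdeal R} {x y : R}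
    (hxy : ∀ r, x * r * y ∈ P) {w : R} (hw : w ∈ span {y}) (r : R) : x * r * w ∈ P := by
  induction hw using span_induction generalizing r with
  | mem z hz => exact Set.mem_singleton_iff.1 hz ▸ hxy r
  | zero => simp
  | add z z' _ _ ih ih' => simpa [mul_add] using P.add_mem (ih r) (ih' r)
  | neg z _ ih => simpa using P.neg_mem (ih r)
  | left_absorb a z _ ih => simpa [mul_assoc] using ih (r * a)
  | right_absorb b z _ ih => simpa [mul_assoc] using P.mul_mem_right _ b (ih r)

theorem mul_mul_mem_of_mem_span_left {P : TwoSidedIdeal R} {x w : R}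
    (hxw : ∀ r, x * r * w ∈ P) {t : R} (ht : t ∈ span {x}) (r : R) : t * r * w ∈ P := by
  induction ht using span_induction generalizing r with
  | mem z hz => exact Set.mem_singleton_iff.1 hz ▸ hxw r
  | zero => simp
  | add z z' _ _ ih ih' => simpa [add_mul] using P.add_mem (ih r) (ih' r)
  | neg z _ ih => simpa using P.neg_mem (ih r)
  | left_absorb a z _ ih => simpa [mul_assoc] using P.mul_mem_left a _ (ih r)
  | right_absorb b z _ ih => simpa [mul_assoc] using ih (b * r)

theorem mul_mul_mem_of_mem_sup_span {P : TwoSidedIdeal R} {x y : R}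
    (hxy : ∀ r, x * r * y ∈ P) {u v : R} (hu : u ∈ P ⊔ span {x}) (hv : v ∈ P ⊔ span {y})
    (r : R) : u * r * v ∈ P := by
  obtain ⟨p, hp, t, ht, rfl⟩ := mem_sup.1 hu
  obtain ⟨q, hq, w, hw, rfl⟩ := mem_sup.1 hv
  have htw : t * r * w ∈ P :=
    mul_mul_mem_of_mem_span_left (mul_mul_mem_of_mem_span_right hxy hw) ht r
  have hexpand : (p + t) * r * (q + w) = p * (r * (q + w)) + t * r * q + t * r * w := by
    noncomm_ring
  rw [hexpand]
  exact P.add_mem (P.add_mem (P.mul_mem_right _ _ hp) (P.mul_mem_left _ _ hq)) htw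

end TwoSidedIdeal

open TwoSidedIdeal

section MSequence

variable {R : Type*} [Ring R]

def IsMSequence (f : ℕ → R) : Prop :=
  ∀ n, ∃ r, f (n + 1) = f n * r * f n

theorem IsMSequence.map {T : Type*} [Ring T] {f : ℕ → R} (hf : IsMSequence f) (φ : R →+* T) :
    IsMSequence (φ ∘ f) := fun n => by
  obtain ⟨r, hr⟩ := hf n
  exact ⟨φ r, by simp [hr]⟩

theorem IsMSequence.mem_of_le {f : ℕ → R} (hf : IsMSequence f) (I : TwoSidedIdeal R) {m n : ℕ}
    (hmn : m ≤ n) (hm : f m ∈ I) : f n ∈ I := by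
  induction n, hmn using Nat.le_induction with
  | base => exact hm
  | succ n _ ih =>
    obtain ⟨r, hr⟩ := hf n
    rw [hr]
    exact I.mul_mem_right _ _ (I.mul_mem_right _ _ ih)

theorem IsMSequence.isPrimeTwoSided {f : ℕ → R} (hf : IsMSequence f) {P : TwoSidedIdeal R}
    (hP : ∀ n, f n ∉ P) (hmax : ∀ x ∉ P, ∃ m, f m ∈ P ⊔ span {x}) : IsPrimeTwoSided P := by
  refine ⟨fun htop => hP 0 (htop ▸ mem_top _), fun x y hxy => ?_⟩
  by_contra! h
  obtain ⟨m, hm⟩ := hmax x h.1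
  obtain ⟨k, hk⟩ := hmax y h.2
  obtain ⟨r, hr⟩ := hf (max m k)
  refine hP (max m k + 1) ?_
  rw [hr]
  exact mul_mul_mem_of_mem_sup_span hxy (hf.mem_of_le _ (le_max_left m k) hm)
    (hf.mem_of_le _ (le_max_right m k) hk) r

theorem IsMSequence.exists_isPrimeTwoSided {f : ℕ → R} (hf : IsMSequence f)
    (hf0 : ∀ n, f n ≠ 0) : ∃ P : TwoSidedIdeal R, IsPrimeTwoSided P ∧ ∀ n, f n ∉ P := by
  have hchain : ∀ c ⊆ {I : TwoSidedIdeal R | ∀ n, f n ∉ I}, IsChain (· ≤ ·) c →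
      ∀ I ∈ c, ∃ J ∈ {I : TwoSidedIdeal R | ∀ n, f n ∉ I}, ∀ K ∈ c, K ≤ J := by
    refine fun c hcs hc I hI => ⟨sSup c, fun n hn => ?_, fun K hK => le_sSup hK⟩
    obtain ⟨K, hK, hnK⟩ := (mem_sSup_of_isChain hc ⟨I, hI⟩).1 hn
    exact hcs hK n hnK
  obtain ⟨P, -, hPmax⟩ := zorn_le_nonempty₀ _ hchain ⊥ (by simpa [mem_bot] using hf0)
  refine ⟨P, hf.isPrimeTwoSided hPmax.prop fun x hx => ?_, hPmax.prop⟩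
  by_contra! h
  exact hx (hPmax.le_of_ge h le_sup_left (mem_sup_right (subset_span rfl)))

theorem IsPrimeTwoSided.exists_isMSequence {P : TwoSidedIdeal R} (hP : IsPrimeTwoSided P)
    {a : R} (ha : a ∉ P) : ∃ f : ℕ → R, f 0 = a ∧ IsMSequence f ∧ ∀ n, f n ∉ P := by
  have hstep : ∀ x : {x // x ∉ P}, ∃ r, x.1 * r * x.1 ∉ P := fun x => by
    by_contra! h
    exact x.2 ((hP.2 x x h).elim id id)
  choose r hr using hstep
  let g : ℕ → {x // x ∉ P} := fun n => Nat.rec ⟨a, ha⟩ (fun _ x => ⟨x.1 * r x * x.1, hr x⟩) n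
  exact ⟨fun n => (g n).1, rfl, fun n => ⟨r (g n), rfl⟩, fun n => (g n).2⟩

theorem mem_primeRadical_iff {a : R} :
    a ∈ primeRadical R ↔ ∀ f : ℕ → R, f 0 = a → IsMSequence f → ∃ n, f n = 0 := by
  constructor
  · intro ha f hf0 hf
    by_contra! h
    obtain ⟨P, hP, hfP⟩ := hf.exists_isPrimeTwoSided h
    exact hfP 0 (hf0 ▸ ha P hP)
  · intro h P hP
    by_contra ha
    obtain ⟨f, hf0, hf, hfP⟩ := hP.exists_isMSequence ha
    obtain ⟨n, hn⟩ := h f hf0 hf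
    exact hfP n (hn ▸ P.zero_mem)

end MSequence

section Functoriality

variable {R T : Type*} [Ring R] [Ring T]

theorem mul_mem_primeRadical_left (y : R) {x : R} (hx : x ∈ primeRadical R) :
    y * x ∈ primeRadical R :=
  fun P hP => P.mul_mem_left y x (hx P hP)

theorem mem_primeRadical_of_map_mem (φ : R →+* T) (hφ : Function.Injective φ) {a : R}
    (ha : φ a ∈ primeRadical T) : a ∈ primeRadical R := by
  rw [mem_primeRadical_iff] at ha ⊢
  intro f hf0 hf
  obtain ⟨n, hn⟩ := ha (φ ∘ f) (by simp [hf0]) (hf.map φ)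
  exact ⟨n, hφ (by simpa using hn)⟩

theorem IsPrimeTwoSided.comap (φ : R →+* T)
    (hφ : ∀ y : T, ∃ c ∈ Set.center T, ∃ r, y = c * φ r) {Q : TwoSidedIdeal T}
    (hQ : IsPrimeTwoSided Q) : IsPrimeTwoSided (Q.comap φ) := by
  refine ⟨fun htop => hQ.1 ?_, fun a b hab => ?_⟩
  · rw [← one_mem_iff, ← map_one φ, ← mem_comap, htop]
    exact mem_top _
  · simp only [mem_comap] at hab ⊢
    refine hQ.2 _ _ fun y => ?_
    obtain ⟨c, hc, r, rfl⟩ := hφ y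
    have hcomm : φ a * (c * φ r) * φ b = c * φ (a * r * b) := by
      rw [map_mul, map_mul, ← mul_assoc (φ a), Semigroup.mem_center_iff.1 hc (φ a)]
      simp only [mul_assoc]
    rw [hcomm]
    exact Q.mul_mem_left _ _ (hab r)

theorem map_mem_primeRadical (φ : R →+* T)
    (hφ : ∀ y : T, ∃ c ∈ Set.center T, ∃ r, y = c * φ r) {a : R} (ha : a ∈ primeRadical R) :
    φ a ∈ primeRadical T :=
  fun _ hQ => (mem_comap φ).1 (ha _ (hQ.comap φ hφ))

end Functoriality

namespace OreLocalization

variable {R : Type*} [Ring R] {S : Submonoid R} [OreSet S]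

theorem oreDiv_mul_oreDiv_of_mem_center (a b : R) (u : S) {v : S} (hv : (v : R) ∈ Set.center R) :
    a /ₒ u * (b /ₒ v) = a * b /ₒ (v * u) :=
  oreDiv_mul_char a b u v a v (Semigroup.mem_center_iff.1 hv a).symm

theorem one_oreDiv_mem_center {s : S} (hs : (s : R) ∈ Set.center R) :
    (1 /ₒ s : R[S⁻¹]) ∈ Set.center R[S⁻¹] := by
  refine Semigroup.mem_center_iff.2 fun y => ?_
  induction y using OreLocalization.ind with | _ r t
  rw [oreDiv_mul_oreDiv_of_mem_center _ _ _ hs, OreLocalization.one_div_mul, mul_one]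
  congr 1
  exact Subtype.ext (Semigroup.mem_center_iff.1 hs t).symm

theorem exists_mem_center_eq_mul_numeratorRingHom (hS : (S : Set R) ⊆ Set.center R)
    (y : R[S⁻¹]) : ∃ c ∈ Set.center R[S⁻¹], ∃ r, y = c * numeratorRingHom r := by
  induction y using OreLocalization.ind with | _ r s
  exact ⟨1 /ₒ s, one_oreDiv_mem_center (hS s.2), r, by simp⟩

end OreLocalization

open OreLocalization

/-- If `S` is a multiplicatively closed set of central regular elements, then the prime radical
of the localization `S⁻¹R` is `{ u⁻¹ a : u ∈ S, a ∈ P(R) }`. -/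
theorem primeRadical_oreLocalization (R : Type*) [Ring R] (S : Submonoid R)
    [OreLocalization.OreSet S]
    (hcen : (S : Set R) ⊆ Set.center R) (hreg : (S : Set R) ⊆ nonZeroDivisors R) :
    primeRadical (OreLocalization S R) =
      {x : OreLocalization S R | ∃ u : S, ∃ a ∈ primeRadical R, x = a /ₒ u} := by
  ext x
  constructor
  · intro hx
    induction x using OreLocalization.ind with | _ a u
    have ha : numeratorRingHom a = (u : R) /ₒ (1 : S) * (a /ₒ u) := by simp
    refine ⟨u, a, mem_primeRadical_of_map_mem numeratorRingHom
      (numeratorHom_inj fun s hs => (hreg hs).1) ?_, rfl⟩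
    rw [ha]
    exact mul_mem_primeRadical_left _ hx
  · rintro ⟨u, a, ha, rfl⟩
    have hx : a /ₒ u = 1 /ₒ u * numeratorRingHom a := by simp
    rw [hx]
    exact mul_mem_primeRadical_left _
      (map_mem_primeRadical _ (exists_mem_center_eq_mul_numeratorRingHom hcen) ha)
end

section
/- If the polynomial ring R[x] is P-symmetric, then the Laurent polynomial ring R[x, x^{-1}] is P-symmetric. -/
open LaurentPolynomial Polynomial in
private lemma comapPrimeAux {R : Type*} [Ring R] (Q : TwoSidedIdeal (LaurentPolynomial R))
    (hQ : IsPrimeTwoSided Q) :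
    IsPrimeTwoSided (Q.comap (Polynomial.toLaurent (R := R))) := by
  constructor
  · intro htop
    apply hQ.1
    rw [← TwoSidedIdeal.one_mem_iff]
    have h1 : (1 : R[X]) ∈ Q.comap (Polynomial.toLaurent (R := R)) := htop ▸ trivial
    simpa [TwoSidedIdeal.mem_comap] using h1
  · intro a b hab
    have main : ∀ r : LaurentPolynomial R, toLaurent a * r * toLaurent b ∈ Q := by
      intro r
      obtain ⟨k, r', hr'⟩ := r.exists_T_pow
      have h1 : toLaurent (a * r' * b) ∈ Q := by
        have := hab r'
        rwa [TwoSidedIdeal.mem_comap] at this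
      have h2 : toLaurent (a * r' * b) = toLaurent a * r * toLaurent b * T (k : ℤ) := by
        rw [map_mul, map_mul, hr', ← mul_assoc, mul_assoc (toLaurent a * r), T_mul,
          ← mul_assoc]
      have h3 : toLaurent a * r * toLaurent b
          = toLaurent (a * r' * b) * T (-(k : ℤ)) := by
        rw [h2, mul_assoc (toLaurent a * r * toLaurent b), ← T_add, add_neg_cancel, T_zero, mul_one]
      rw [h3]
      exact Q.mul_mem_right _ _ h1
    rcases hQ.2 (toLaurent a) (toLaurent b) main with h | h
    · exact Or.inl (by rwa [TwoSidedIdeal.mem_comap])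
    · exact Or.inr (by rwa [TwoSidedIdeal.mem_comap])

open LaurentPolynomial Polynomial in
private lemma toLaurent_mem_primeRadical {R : Type*} [Ring R] (p : R[X])
    (hp : p ∈ primeRadical R[X]) : toLaurent p ∈ primeRadical (LaurentPolynomial R) := by
  intro Q hQ
  have := hp (Q.comap (Polynomial.toLaurent (R := R))) (comapPrimeAux Q hQ)
  rwa [TwoSidedIdeal.mem_comap] at this

open LaurentPolynomial Polynomial in
/-- If the polynomial ring `R[x]` is `P`-symmetric, then the Laurent polynomial ring
`R[x, x⁻¹]` is `P`-symmetric. -/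
theorem laurent_isPSymmetric_of_polynomial (R : Type*) [Ring R]
    (h : IsPSymmetric (Polynomial R)) : IsPSymmetric (LaurentPolynomial R) := by
  intro a b c habc
  obtain ⟨n, a', ha⟩ := a.exists_T_pow
  obtain ⟨m, b', hb⟩ := b.exists_T_pow
  obtain ⟨k, c', hc⟩ := c.exists_T_pow
  have hcomm : ∀ (u v : LaurentPolynomial R) (i j : ℤ),
      (u * T i) * (v * T j) = u * v * T (i + j) := by
    intro u v i j
    rw [mul_assoc, T_mul, mul_assoc, ← T_add, add_comm j i, ← mul_assoc]
  have key : ∀ (u v w : LaurentPolynomial R) (i j l : ℤ),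
      (u * T i) * (v * T j) * (w * T l) = u * v * w * T (i + j + l) := by
    intro u v w i j l
    rw [hcomm u v, hcomm (u * v) w]
  have habc' : a' * b' * c' = 0 := by
    have h0 : toLaurent (a' * b' * c') = 0 := by
      rw [map_mul, map_mul, ha, hb, hc, key, habc, zero_mul]
    exact Polynomial.toLaurent_injective (by simpa using h0)
  have hbac := h a' b' c' habc'
  have hlaurent := toLaurent_mem_primeRadical _ hbac
  have heq : b * a * c = toLaurent (b' * a' * c') * T (-((m : ℤ) + n + k)) := by
    rw [map_mul, map_mul, hb, ha, hc, key, mul_assoc (b * a * c), ← T_add, add_neg_cancel, T_zero, mul_one]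
  rw [heq]
  intro Q hQ
  exact Q.mul_mem_right _ _ (hlaurent Q hQ)
end

section
/- If R is an Armendariz P-symmetric ring, then the polynomial ring R[x] is P-symmetric. -/
/-- A ring is Armendariz if `f * g = 0` in `R[x]` implies all products of their
coefficients vanish. -/
def IsArmendariz (R : Type*) [Ring R] : Prop :=
  ∀ f g : Polynomial R, f * g = 0 → ∀ i j : ℕ, f.coeff i * g.coeff j = 0

open Polynomial

/-- membership from coefficients -/
lemma mem_of_coeffs {R : Type*} [Ring R] (Q : TwoSidedIdeal (Polynomial R))
    (p : Polynomial R) (hp : ∀ n, (C (p.coeff n) : Polynomial R) ∈ Q) : p ∈ Q := by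
  rw [p.as_sum_support]
  refine sum_mem ?_
  intro i _
  rw [← C_mul_X_pow_eq_monomial]
  exact Q.mul_mem_right _ _ (hp i)

/-- contraction of a prime ideal of R[x] to R -/
def contr {R : Type*} [Ring R] (Q : TwoSidedIdeal (Polynomial R)) : TwoSidedIdeal R :=
  TwoSidedIdeal.mk' {r | (C r : Polynomial R) ∈ Q}
    (by simp [Q.zero_mem])
    (fun hx hy => by simpa [C_add] using Q.add_mem hx hy)
    (fun hx => by simpa [C_neg] using Q.neg_mem hx)
    (fun hy => by simpa [C_mul] using Q.mul_mem_left _ _ hy)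
    (fun hx => by simpa [C_mul] using Q.mul_mem_right _ _ hx)

lemma mem_contr {R : Type*} [Ring R] (Q : TwoSidedIdeal (Polynomial R)) (r : R) :
    r ∈ contr Q ↔ (C r : Polynomial R) ∈ Q := TwoSidedIdeal.mem_mk' _ _ _ _ _ _ r

lemma contr_prime {R : Type*} [Ring R] (Q : TwoSidedIdeal (Polynomial R))
    (hQ : IsPrimeTwoSided Q) : IsPrimeTwoSided (contr Q) := by
  constructor
  · intro htop
    have h1 : (1 : R) ∈ contr Q := htop ▸ trivial
    have h2 := (mem_contr Q 1).1 h1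
    rw [map_one] at h2
    exact hQ.1 (TwoSidedIdeal.eq_top Q h2)
  · intro a b hab
    have key : ∀ p : Polynomial R, (C a : Polynomial R) * p * C b ∈ Q := by
      intro p
      apply mem_of_coeffs
      intro n
      have : ((C a : Polynomial R) * p * C b).coeff n = a * p.coeff n * b := by
        rw [coeff_mul_C, coeff_C_mul]
      rw [this]
      exact (mem_contr Q _).1 (hab _)
    rcases hQ.2 _ _ key with h | h
    · exact Or.inl ((mem_contr Q a).2 h)
    · exact Or.inr ((mem_contr Q b).2 h)

lemma coeffs_mem_radical {R : Type*} [Ring R] {p : Polynomial R}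
    (hp : ∀ n, p.coeff n ∈ primeRadical R) : p ∈ primeRadical (Polynomial R) := by
  intro Q hQ
  exact mem_of_coeffs Q p fun n => (mem_contr Q _).1 (hp n (contr Q) (contr_prime Q hQ))

lemma radical_sum_mem {R : Type*} [Ring R] {ι : Type*} (s : Finset ι) (f : ι → R)
    (hf : ∀ i ∈ s, f i ∈ primeRadical R) : (∑ i ∈ s, f i) ∈ primeRadical R := by
  intro P hP
  exact sum_mem fun i hi => hf i hi P hP

/-- If `R` is an Armendariz `P`-symmetric ring, then `R[x]` is `P`-symmetric. -/
theorem polynomial_isPSymmetric (R : Type*) [Ring R]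
    (harm : IsArmendariz R) (h : IsPSymmetric R) : IsPSymmetric (Polynomial R) := by
  intro f g k hfgk
  -- step 1: coefficientwise vanishing
  have h1 : f * (g * k) = 0 := by rw [← mul_assoc]; exact hfgk
  have h2 : ∀ i m, f.coeff i * (g * k).coeff m = 0 := harm _ _ h1
  have h3 : ∀ i j m, f.coeff i * g.coeff j * k.coeff m = 0 := by
    intro i j m
    have hz : (C (f.coeff i) * g) * k = 0 := by
      rw [mul_assoc]
      ext n
      rw [coeff_C_mul]
      simpa using h2 i n
    have := harm _ _ hz j m
    rwa [coeff_C_mul] at this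
  -- step 2: each coefficient of g * f * k is in primeRadical R
  apply coeffs_mem_radical
  intro n
  rw [coeff_mul, ]
  apply radical_sum_mem
  rintro ⟨m, c⟩ _
  rw [coeff_mul, Finset.sum_mul]
  apply radical_sum_mem
  rintro ⟨j, i⟩ _
  exact h (f.coeff i) (g.coeff j) (k.coeff c) (h3 i j c)
end

section
/- A ring R is P-symmetric if and only if the ring T_n(R) of n×n upper triangular matrices over R is P-symmetric, for every n ≥ 1. -/
/-- The ring `T_n(R)` of `n × n` upper triangular matrices over `R`, as a subring of the
matrix ring. -/
def upperTriangularSubring (n : ℕ) (R : Type*) [Ring R] :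
    Subring (Matrix (Fin n) (Fin n) R) where
  carrier := {M | ∀ i j : Fin n, j < i → M i j = 0}
  zero_mem' := by intro i j _; simp
  one_mem' := by intro i j h; exact Matrix.one_apply_ne (ne_of_gt h)
  add_mem' := by
    intro M N hM hN i j h
    simp [Matrix.add_apply, hM i j h, hN i j h]
  neg_mem' := by
    intro M hM i j h
    simp [Matrix.neg_apply, hM i j h]
  mul_mem' := by
    intro M N hM hN i j h
    simp only [Matrix.mul_apply]
    apply Finset.sum_eq_zero
    intro k _
    rcases lt_or_ge k i with hk | hk
    · rw [hM i k hk, zero_mul]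
    · rw [hN k j (lt_of_lt_of_le h hk), mul_zero]

/-!
The diagonal entries give surjective ring maps `T_n(R) → R`, and each diagonal matrix unit
`e_ii` cuts out a corner `e_ii T_n(R) e_ii ≅ R`; both kinds of maps carry prime radicals
into prime radicals. Conversely, a matrix with diagonal in `P(R)` is a sum of such corner
elements plus a strictly upper triangular matrix, which lies in the nilpotent ideal of
strictly upper triangular matrices and hence in every prime ideal. So `P(T_n(R))` is
exactly the set of matrices with diagonal in `P(R)`, and `P`-symmetry transfers along the
diagonal maps in one direction and along a corner embedding in the other.
-/

open Matrix

section PrimeRadical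

variable {A B F : Type*} [Ring A] [Ring B] [FunLike F A B] [NonUnitalRingHomClass F A B]

lemma IsPrimeTwoSided.comap_of_corner {φ : F} (hcorner : ∀ s : B, ∃ r, φ 1 * s * φ 1 = φ r)
    {Q : TwoSidedIdeal B} (hQ : IsPrimeTwoSided Q) (h1 : φ 1 ∉ Q) :
    IsPrimeTwoSided (TwoSidedIdeal.comap φ Q) := by
  refine ⟨fun htop => h1 ?_, fun a b hab => ?_⟩
  · exact (TwoSidedIdeal.mem_comap φ).1 (htop ▸ trivial : (1 : A) ∈ TwoSidedIdeal.comap φ Q)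
  · refine (hQ.2 (φ a) (φ b) fun s => ?_).imp
      (TwoSidedIdeal.mem_comap φ).2 (TwoSidedIdeal.mem_comap φ).2
    obtain ⟨r, hr⟩ := hcorner s
    have hcorner_ab : φ a * s * φ b = φ (a * r * b) :=
      calc φ a * s * φ b = φ (a * 1) * s * φ (1 * b) := by simp only [mul_one, one_mul]
        _ = φ (a * r * b) := by simp only [map_mul, mul_assoc, ← hr]
    exact hcorner_ab ▸ (TwoSidedIdeal.mem_comap φ).1 (hab r)

lemma map_mem_primeRadical_of_corner {φ : F} (hcorner : ∀ s : B, ∃ r, φ 1 * s * φ 1 = φ r)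
    {x : A} (hx : x ∈ primeRadical A) : φ x ∈ primeRadical B := by
  intro Q hQ
  by_cases h1 : φ 1 ∈ Q
  · simpa only [← map_mul, mul_one] using Q.mul_mem_left (φ x) _ h1
  · exact (TwoSidedIdeal.mem_comap φ).1 (hx _ (hQ.comap_of_corner hcorner h1))

lemma map_mem_primeRadical_of_surjective {f : A →+* B} (hf : Function.Surjective f)
    {x : A} (hx : x ∈ primeRadical A) : f x ∈ primeRadical B :=
  map_mem_primeRadical_of_corner (φ := f)
    (fun s => (hf s).imp fun r hr => by rw [map_one, mul_one, one_mul, hr]) hx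

end PrimeRadical

namespace Matrix

variable {n : ℕ} {R : Type*}

def ZeroBelowSuperdiag [Zero R] (t : ℕ) (M : Matrix (Fin n) (Fin n) R) : Prop :=
  ∀ i j : Fin n, (j : ℕ) < i + t → M i j = 0

lemma ZeroBelowSuperdiag.mono [Zero R] {s t : ℕ} (hst : s ≤ t) {M : Matrix (Fin n) (Fin n) R}
    (hM : ZeroBelowSuperdiag t M) : ZeroBelowSuperdiag s M :=
  fun i j hij => hM i j (by omega)

lemma ZeroBelowSuperdiag.mul [NonUnitalNonAssocSemiring R] {s t : ℕ}
    {M N : Matrix (Fin n) (Fin n) R} (hM : ZeroBelowSuperdiag s M) (hN : ZeroBelowSuperdiag t N) :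
    ZeroBelowSuperdiag (s + t) (M * N) := by
  intro i j hij
  rw [mul_apply]
  refine Finset.sum_eq_zero fun k _ => ?_
  rcases lt_or_ge (k : ℕ) (i + s) with hk | hk
  · rw [hM i k hk, zero_mul]
  · rw [hN k j (by omega), mul_zero]

lemma ZeroBelowSuperdiag.eq_zero [Zero R] {M : Matrix (Fin n) (Fin n) R}
    (hM : ZeroBelowSuperdiag n M) : M = 0 :=
  Matrix.ext fun i j => hM i j (by omega)

end Matrix

namespace upperTriangularSubring

variable {n : ℕ} {R : Type*} [Ring R]

lemma zeroBelowSuperdiag (M : upperTriangularSubring n R) : ZeroBelowSuperdiag 0 M.1 :=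
  fun i j hij => M.2 i j (Fin.lt_def.2 (by omega))

/- Descending induction on `t`: if `M` vanishes below the `t`-th superdiagonal with `t ≥ 1`,
then every `M * S * M` vanishes below the `(t + 1)`-th one, and `M ∈ Q` by primeness. -/
lemma mem_of_zeroBelowSuperdiag_one {Q : TwoSidedIdeal (upperTriangularSubring n R)}
    (hQ : IsPrimeTwoSided Q) {M : upperTriangularSubring n R}
    (hM : ZeroBelowSuperdiag 1 M.1) : M ∈ Q := by
  suffices key : ∀ k t, 1 ≤ t → n ≤ t + k → ∀ M : upperTriangularSubring n R,
      ZeroBelowSuperdiag t M.1 → M ∈ Q from key n 1 le_rfl (by omega) M hM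
  intro k
  induction k with
  | zero =>
    intro t _ hnt M hM
    rw [show M = 0 from Subtype.ext (hM.mono hnt).eq_zero]
    exact Q.zero_mem
  | succ k ih =>
    intro t ht hnt M hM
    refine (hQ.2 M M fun S => ih (t + 1) (by omega) (by omega) _ ?_).elim id id
    exact ((hM.mul (zeroBelowSuperdiag S)).mul hM).mono (by omega)

def diagHom (i : Fin n) : upperTriangularSubring n R →+* R where
  toFun M := M.1 i i
  map_one' := one_apply_eq i
  map_mul' M N := by
    change (M.1 * N.1) i i = M.1 i i * N.1 i i
    refine (mul_apply ..).trans (Finset.sum_eq_single i (fun k _ hk => ?_) (by simp))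
    rcases lt_or_gt_of_ne hk with h | h
    · rw [M.2 i k h, zero_mul]
    · rw [N.2 k i h, mul_zero]
  map_zero' := rfl
  map_add' _ _ := rfl

@[simp]
lemma diagHom_apply (i : Fin n) (M : upperTriangularSubring n R) : diagHom i M = M.1 i i := rfl

def singleHom (i : Fin n) : R →ₙ+* upperTriangularSubring n R where
  toFun d := ⟨single i i d, fun _ _ h => single_apply_of_ne _ _ _ _ _ fun ⟨hk, hj⟩ =>
    h.ne (hj ▸ hk)⟩
  map_mul' a b := Subtype.ext (single_mul_single_same a i i i b).symm
  map_zero' := Subtype.ext (single_zero i i)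
  map_add' a b := Subtype.ext (single_add i i a b)

@[simp]
lemma diagHom_singleHom (i : Fin n) (d : R) : diagHom i (singleHom i d) = d :=
  single_apply_same i i d

lemma diagHom_surjective (i : Fin n) : Function.Surjective (diagHom (R := R) i) :=
  fun d => ⟨singleHom i d, diagHom_singleHom i d⟩

lemma singleHom_mul_mul_singleHom (i : Fin n) (a b : R) (M : upperTriangularSubring n R) :
    singleHom i a * M * singleHom i b = singleHom i (a * diagHom i M * b) :=
  Subtype.ext (single_mul_mul_single i i i i a M.1 b)

lemma sub_sum_singleHom_diag_zeroBelowSuperdiag (M : upperTriangularSubring n R) :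
    ZeroBelowSuperdiag 1 (M - ∑ i, singleHom i (diagHom i M)).1 := by
  intro i j hij
  have hsum : (∑ k, singleHom k (diagHom k M)).1 = diagonal fun k => M.1 k k := by
    rw [AddSubmonoidClass.coe_finsetSum]
    exact sum_single_eq_diagonal _
  rw [AddSubgroupClass.coe_sub, hsum, Matrix.sub_apply]
  rcases eq_or_ne i j with rfl | hne
  · rw [diagonal_apply_eq, sub_self]
  · rw [diagonal_apply_ne _ hne, M.2 i j (Fin.lt_def.2 (by omega)), sub_zero]

theorem mem_primeRadical_iff {M : upperTriangularSubring n R} :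
    M ∈ primeRadical (upperTriangularSubring n R) ↔ ∀ i, M.1 i i ∈ primeRadical R := by
  refine ⟨fun hM i => map_mem_primeRadical_of_surjective (diagHom_surjective i) hM,
    fun hM Q hQ => ?_⟩
  have hdiag : ∑ i, singleHom i (diagHom i M) ∈ Q := by
    refine sum_mem fun i _ => map_mem_primeRadical_of_corner (fun S => ?_) (hM i) Q hQ
    exact ⟨1 * diagHom i S * 1, singleHom_mul_mul_singleHom i 1 1 S⟩
  have hstrict := mem_of_zeroBelowSuperdiag_one hQ (sub_sum_singleHom_diag_zeroBelowSuperdiag M)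
  simpa only [sub_add_cancel] using Q.add_mem hstrict hdiag

theorem _root_.IsPSymmetric.upperTriangularSubring (hR : IsPSymmetric R) (n : ℕ) :
    IsPSymmetric (upperTriangularSubring n R) := by
  intro A B C habc
  refine mem_primeRadical_iff.2 fun i => ?_
  have hdiag : diagHom i A * diagHom i B * diagHom i C = 0 := by
    rw [← map_mul, ← map_mul, habc, map_zero]
  change diagHom i (B * A * C) ∈ primeRadical R
  rw [map_mul, map_mul]
  exact hR _ _ _ hdiag

theorem _root_.IsPSymmetric.of_upperTriangularSubring (hn : 1 ≤ n)
    (hT : IsPSymmetric (upperTriangularSubring n R)) : IsPSymmetric R := by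
  intro a b c habc
  let i : Fin n := ⟨0, hn⟩
  have hcorner : singleHom i a * singleHom i b * singleHom i c = 0 := by
    rw [← map_mul, ← map_mul, habc, map_zero]
  have hbac := mem_primeRadical_iff.1 (hT _ _ _ hcorner) i
  rwa [← map_mul, ← map_mul, ← diagHom_apply, diagHom_singleHom] at hbac

end upperTriangularSubring

/-- `R` is `P`-symmetric if and only if `T_n(R)` is `P`-symmetric, for every `n ≥ 1`. -/
theorem isPSymmetric_iff_upperTriangular (R : Type*) [Ring R] :
    ∀ n : ℕ, 1 ≤ n → (IsPSymmetric R ↔ IsPSymmetric (upperTriangularSubring n R)) :=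
  fun n hn => ⟨fun hR => hR.upperTriangularSubring n, fun hT => hT.of_upperTriangularSubring hn⟩
end

section
/- For a ring R, R is P-symmetric if and only if the subring S = {(x, y) ∈ R × R : x − y ∈ P(R)} of R × R is P-symmetric. -/
/-- The subring `S = {(x, y) ∈ R × R : x - y ∈ P(R)}` of `R × R`. -/
def pairSubring (R : Type*) [Ring R] : Subring (R × R) where
  carrier := {p | p.1 - p.2 ∈ primeRadical R}
  zero_mem' := by
    intro P hP
    simpa using P.zero_mem
  one_mem' := by
    intro P hP
    simpa using P.zero_mem
  add_mem' := by
    intro p q hp hq P hP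
    have e : (p + q).1 - (p + q).2 = (p.1 - p.2) + (q.1 - q.2) := by
      simp only [Prod.fst_add, Prod.snd_add]; abel
    rw [e]
    exact P.add_mem (hp P hP) (hq P hP)
  neg_mem' := by
    intro p hp P hP
    have e : (-p).1 - (-p).2 = -(p.1 - p.2) := by
      simp only [Prod.fst_neg, Prod.snd_neg]; abel
    rw [e]
    exact P.neg_mem (hp P hP)
  mul_mem' := by
    intro p q hp hq P hP
    have e : (p * q).1 - (p * q).2 = p.1 * (q.1 - q.2) + (p.1 - p.2) * q.2 := by
      simp only [Prod.fst_mul, Prod.snd_mul]; noncomm_ring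
    rw [e]
    exact P.add_mem (P.mul_mem_left _ _ (hq P hP)) (P.mul_mem_right _ _ (hp P hP))

namespace PRaux
variable {R : Type*} [Ring R]

lemma pr_zero : (0:R) ∈ primeRadical R := fun P _ => P.zero_mem
lemma pr_neg {x : R} (h : x ∈ primeRadical R) : -x ∈ primeRadical R :=
  fun P hP => P.neg_mem (h P hP)
lemma pr_mul_left (r : R) {x : R} (h : x ∈ primeRadical R) : r * x ∈ primeRadical R :=
  fun P hP => P.mul_mem_left _ _ (h P hP)
lemma pr_mul_right (r : R) {x : R} (h : x ∈ primeRadical R) : x * r ∈ primeRadical R :=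
  fun P hP => P.mul_mem_right _ _ (h P hP)

lemma diag_mem (x : R) : ((x, x) : R × R) ∈ pairSubring R := by
  show x - x ∈ primeRadical R
  simpa using pr_zero

/-- diagonal element of the subring -/
def diag (x : R) : pairSubring R := ⟨(x, x), diag_mem x⟩

lemma mem_pair_of_snd {v : R} (hv : v ∈ primeRadical R) :
    ((0, v) : R × R) ∈ pairSubring R := by
  show (0:R) - v ∈ primeRadical R
  rw [zero_sub]; exact pr_neg hv

lemma mem_pair_of_fst {v : R} (hv : v ∈ primeRadical R) :
    ((v, 0) : R × R) ∈ pairSubring R := by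
  show v - 0 ∈ primeRadical R
  rw [sub_zero]; exact hv

/-- fst-component ideal of the pair ring -/
def fstIdeal (Q : TwoSidedIdeal R) : TwoSidedIdeal (pairSubring R) :=
  TwoSidedIdeal.mk' {s : pairSubring R | (s : R × R).1 ∈ Q}
    Q.zero_mem
    (fun hx hy => Q.add_mem hx hy)
    (fun hx => Q.neg_mem hx)
    (fun hy => Q.mul_mem_left _ _ hy)
    (fun hx => Q.mul_mem_right _ _ hx)

lemma mem_fstIdeal {Q : TwoSidedIdeal R} {s : pairSubring R} :
    s ∈ fstIdeal Q ↔ (s : R × R).1 ∈ Q :=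
  TwoSidedIdeal.mem_mk' _ _ _ _ _ _ _

def sndIdeal (Q : TwoSidedIdeal R) : TwoSidedIdeal (pairSubring R) :=
  TwoSidedIdeal.mk' {s : pairSubring R | (s : R × R).2 ∈ Q}
    Q.zero_mem
    (fun hx hy => Q.add_mem hx hy)
    (fun hx => Q.neg_mem hx)
    (fun hy => Q.mul_mem_left _ _ hy)
    (fun hx => Q.mul_mem_right _ _ hx)

lemma mem_sndIdeal {Q : TwoSidedIdeal R} {s : pairSubring R} :
    s ∈ sndIdeal Q ↔ (s : R × R).2 ∈ Q :=
  TwoSidedIdeal.mem_mk' _ _ _ _ _ _ _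

lemma fstIdeal_prime {Q : TwoSidedIdeal R} (hQ : IsPrimeTwoSided Q) :
    IsPrimeTwoSided (fstIdeal Q) := by
  constructor
  · intro htop
    apply hQ.1
    apply TwoSidedIdeal.eq_top
    have h1 : (1 : pairSubring R) ∈ fstIdeal Q := htop ▸ trivial
    exact mem_fstIdeal.1 h1
  · intro a b hab
    have key : ∀ r : R, (a : R × R).1 * r * (b : R × R).1 ∈ Q := by
      intro r
      have := mem_fstIdeal.1 (hab (diag r))
      exact this
    rcases hQ.2 _ _ key with h | h
    · exact Or.inl (mem_fstIdeal.2 h)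
    · exact Or.inr (mem_fstIdeal.2 h)

lemma sndIdeal_prime {Q : TwoSidedIdeal R} (hQ : IsPrimeTwoSided Q) :
    IsPrimeTwoSided (sndIdeal Q) := by
  constructor
  · intro htop
    apply hQ.1
    apply TwoSidedIdeal.eq_top
    have h1 : (1 : pairSubring R) ∈ sndIdeal Q := htop ▸ trivial
    exact mem_sndIdeal.1 h1
  · intro a b hab
    have key : ∀ r : R, (a : R × R).2 * r * (b : R × R).2 ∈ Q := by
      intro r
      have := mem_sndIdeal.1 (hab (diag r))
      exact this
    rcases hQ.2 _ _ key with h | h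
    · exact Or.inl (mem_sndIdeal.2 h)
    · exact Or.inr (mem_sndIdeal.2 h)

/-- preimage of an ideal of the pair ring under the diagonal map -/
def diagIdeal (Q : TwoSidedIdeal (pairSubring R)) : TwoSidedIdeal R :=
  TwoSidedIdeal.mk' {x : R | diag x ∈ Q}
    Q.zero_mem
    (fun {x y} hx hy => show diag (x + y) ∈ Q from Q.add_mem hx hy)
    (fun {x} hx => show diag (-x) ∈ Q from Q.neg_mem hx)
    (fun {x y} hy => show diag (x * y) ∈ Q from Q.mul_mem_left (diag x) (diag y) hy)
    (fun {x y} hx => show diag (x * y) ∈ Q from Q.mul_mem_right (diag x) (diag y) hx)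

lemma mem_diagIdeal {Q : TwoSidedIdeal (pairSubring R)} {x : R} :
    x ∈ diagIdeal Q ↔ diag x ∈ Q :=
  TwoSidedIdeal.mem_mk' _ _ _ _ _ _ _

lemma diagIdeal_prime_K1 {Q : TwoSidedIdeal (pairSubring R)} (hQ : IsPrimeTwoSided Q)
    (hK : ∀ s : pairSubring R, (s : R × R).1 = 0 → s ∈ Q) :
    IsPrimeTwoSided (diagIdeal Q) := by
  constructor
  · intro htop
    apply hQ.1
    apply TwoSidedIdeal.eq_top
    have h1 : (1 : R) ∈ diagIdeal Q := htop ▸ trivial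
    exact mem_diagIdeal.1 h1
  · intro a b hab
    have key : ∀ s : pairSubring R, diag a * s * diag b ∈ Q := by
      intro s
      have hsd : (s : R × R).1 - (s : R × R).2 ∈ primeRadical R := s.2
      have hv : a * ((s : R × R).2 - (s : R × R).1) * b ∈ primeRadical R := by
        rw [← neg_sub]
        exact pr_mul_right b (pr_mul_left a (pr_neg hsd))
      have e : diag a * s * diag b =
          diag (a * (s : R × R).1 * b)
            + ⟨(0, a * ((s : R × R).2 - (s : R × R).1) * b), mem_pair_of_snd hv⟩ := by
        apply Subtype.ext
        apply Prod.ext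
        · show a * (s : R × R).1 * b = a * (s : R × R).1 * b + 0
          abel
        · show a * (s : R × R).2 * b
            = a * (s : R × R).1 * b + a * ((s : R × R).2 - (s : R × R).1) * b
          noncomm_ring
      rw [e]
      exact Q.add_mem (mem_diagIdeal.1 (hab _)) (hK _ rfl)
    rcases hQ.2 _ _ key with h | h
    · exact Or.inl (mem_diagIdeal.2 h)
    · exact Or.inr (mem_diagIdeal.2 h)

lemma diagIdeal_prime_K2 {Q : TwoSidedIdeal (pairSubring R)} (hQ : IsPrimeTwoSided Q)
    (hK : ∀ s : pairSubring R, (s : R × R).2 = 0 → s ∈ Q) :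
    IsPrimeTwoSided (diagIdeal Q) := by
  constructor
  · intro htop
    apply hQ.1
    apply TwoSidedIdeal.eq_top
    have h1 : (1 : R) ∈ diagIdeal Q := htop ▸ trivial
    exact mem_diagIdeal.1 h1
  · intro a b hab
    have key : ∀ s : pairSubring R, diag a * s * diag b ∈ Q := by
      intro s
      have hsd : (s : R × R).1 - (s : R × R).2 ∈ primeRadical R := s.2
      have hv : a * ((s : R × R).1 - (s : R × R).2) * b ∈ primeRadical R :=
        pr_mul_right b (pr_mul_left a hsd)
      have e : diag a * s * diag b =
          diag (a * (s : R × R).2 * b)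
            + ⟨(a * ((s : R × R).1 - (s : R × R).2) * b, 0), mem_pair_of_fst hv⟩ := by
        apply Subtype.ext
        apply Prod.ext
        · show a * (s : R × R).1 * b
            = a * (s : R × R).2 * b + a * ((s : R × R).1 - (s : R × R).2) * b
          noncomm_ring
        · show a * (s : R × R).2 * b = a * (s : R × R).2 * b + 0
          abel
      rw [e]
      exact Q.add_mem (mem_diagIdeal.1 (hab _)) (hK _ rfl)
    rcases hQ.2 _ _ key with h | h
    · exact Or.inl (mem_diagIdeal.2 h)
    · exact Or.inr (mem_diagIdeal.2 h)

lemma mem_pr_pair {p : pairSubring R} :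
    p ∈ primeRadical (pairSubring R) ↔
      (p : R × R).1 ∈ primeRadical R ∧ (p : R × R).2 ∈ primeRadical R := by
  constructor
  · intro h
    constructor
    · intro Q hQ
      exact mem_fstIdeal.1 (h (fstIdeal Q) (fstIdeal_prime hQ))
    · intro Q hQ
      exact mem_sndIdeal.1 (h (sndIdeal Q) (sndIdeal_prime hQ))
  · rintro ⟨h1, h2⟩ Q hQ
    have dich : (∀ s : pairSubring R, (s : R × R).1 = 0 → s ∈ Q) ∨
        (∀ s : pairSubring R, (s : R × R).2 = 0 → s ∈ Q) := by
      by_contra hc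
      push_neg at hc
      obtain ⟨⟨s, hs1, hsQ⟩, ⟨t, ht2, htQ⟩⟩ := hc
      have key : ∀ r : pairSubring R, s * r * t ∈ Q := by
        intro r
        have hz : s * r * t = 0 := by
          apply Subtype.ext
          apply Prod.ext
          · show (s : R × R).1 * (r : R × R).1 * (t : R × R).1 = 0
            rw [hs1, zero_mul, zero_mul]
          · show (s : R × R).2 * (r : R × R).2 * (t : R × R).2 = 0
            rw [ht2, mul_zero]
        rw [hz]; exact Q.zero_mem
      rcases hQ.2 s t key with h | h
      · exact hsQ h
      · exact htQ h
    rcases dich with hK | hK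
    · have hprime := diagIdeal_prime_K1 hQ hK
      have hd : diag (p : R × R).1 ∈ Q := mem_diagIdeal.1 (h1 _ hprime)
      have hv : (p : R × R).2 - (p : R × R).1 ∈ primeRadical R := by
        rw [← neg_sub]; exact pr_neg p.2
      have e : p = diag (p : R × R).1
          + ⟨(0, (p : R × R).2 - (p : R × R).1), mem_pair_of_snd hv⟩ := by
        apply Subtype.ext
        apply Prod.ext
        · show (p : R × R).1 = (p : R × R).1 + 0
          abel
        · show (p : R × R).2 = (p : R × R).1 + ((p : R × R).2 - (p : R × R).1)
          abel
      rw [e]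
      exact Q.add_mem hd (hK _ rfl)
    · have hprime := diagIdeal_prime_K2 hQ hK
      have hd : diag (p : R × R).2 ∈ Q := mem_diagIdeal.1 (h2 _ hprime)
      have hv : (p : R × R).1 - (p : R × R).2 ∈ primeRadical R := p.2
      have e : p = diag (p : R × R).2
          + ⟨((p : R × R).1 - (p : R × R).2, 0), mem_pair_of_fst hv⟩ := by
        apply Subtype.ext
        apply Prod.ext
        · show (p : R × R).1 = (p : R × R).2 + ((p : R × R).1 - (p : R × R).2)
          abel
        · show (p : R × R).2 = (p : R × R).2 + 0
          abel
      rw [e]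
      exact Q.add_mem hd (hK _ rfl)

end PRaux

open PRaux

/-- `R` is `P`-symmetric if and only if the subring
`S = {(x, y) ∈ R × R : x - y ∈ P(R)}` of `R × R` is `P`-symmetric. -/
theorem isPSymmetric_iff_pairSubring (R : Type*) [Ring R] :
    IsPSymmetric R ↔ IsPSymmetric (pairSubring R) := by
  constructor
  · intro h A B C habc
    have h1 : (A : R × R).1 * (B : R × R).1 * (C : R × R).1 = 0 :=
      congrArg (fun s : pairSubring R => (s : R × R).1) habc
    have h2 : (A : R × R).2 * (B : R × R).2 * (C : R × R).2 = 0 :=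
      congrArg (fun s : pairSubring R => (s : R × R).2) habc
    exact mem_pr_pair.2 ⟨h _ _ _ h1, h _ _ _ h2⟩
  · intro h a b c habc
    have hz : diag a * diag b * diag c = (0 : pairSubring R) := by
      apply Subtype.ext
      apply Prod.ext
      · show a * b * c = 0; exact habc
      · show a * b * c = 0; exact habc
    have := h _ _ _ hz
    exact (mem_pr_pair.1 this).1
end
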